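/- arXiv:0706.2901 — 2 statements merged into one kernel-verified Lean document; each statement's English description precedes it below -/
import Mathlib

section
/- Let G be a finite simple graph on N ≥ 2 vertices whose complement Gᶜ has exactly q connected components. Then the multiplicity of N as an eigenvalue of the Laplacian matrix L(G) (equivalently, the dimension of the kernel of L(G) − N·I) is exactly q − 1. -/
/-!
Since `G` and `Gᶜ` together form the complete graph, `L(G) + L(Gᶜ) = L(K_N) = N·I - J`, where `J`
is the all-ones matrix; moreover the entries of `L(H) x` sum to zero for every graph `H`.
So `L(G) x = N x` forces `L(Gᶜ) x = -(∑ x)·1`, summing gives `N ∑ x = 0`, and the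
`N`-eigenspace of `L(G)` is `ker L(Gᶜ) ∩ {∑ x = 0}`. The kernel of `L(Gᶜ)` has dimension `q`
(one indicator vector per component) and contains the constant vector `1`, whose coordinate
sum is `N ≠ 0`, so the hyperplane `∑ x = 0` cuts it down by exactly one dimension.
-/

open Matrix Polynomial

/-- The real Laplacian matrix of a simple graph on `Fin N`. -/
noncomputable def lapR {N : ℕ} (G : SimpleGraph (Fin N)) : Matrix (Fin N) (Fin N) ℝ :=
  letI := Classical.decRel G.Adj
  G.lapMatrix ℝ

/-- The Laplacian eigenvalues of a simple graph on `Fin N`, listed in nondecreasing order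
with multiplicity; `sortedLapEigs G i` is the `(i+1)`-st smallest Laplacian eigenvalue. -/
noncomputable def sortedLapEigs {N : ℕ} (G : SimpleGraph (Fin N)) : Fin N → ℝ :=
  letI := Classical.decRel G.Adj
  let f : Fin N → ℝ := (SimpleGraph.posSemidef_lapMatrix ℝ G).isHermitian.eigenvalues
  f ∘ Tuple.sort f

theorem Submodule.finrank_inf_ker_add_one {K V : Type*} [DivisionRing K] [AddCommGroup V]
    [Module K V] [FiniteDimensional K V] {W : Submodule K V} {f : Module.Dual K V} {v : V}
    (hv : v ∈ W) (hfv : f v ≠ 0) :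
    Module.finrank K ↥(W ⊓ LinearMap.ker f) + 1 = Module.finrank K W := by
  have hf : f.domRestrict W ≠ 0 := fun h ↦ hfv (by simpa using LinearMap.congr_fun h ⟨v, hv⟩)
  rw [← Module.Dual.finrank_ker_add_one_of_ne_zero hf, LinearMap.ker_domRestrict,
    ← Submodule.map_comap_subtype, Submodule.finrank_map_subtype_eq]

namespace SimpleGraph

variable {V R : Type*} [Fintype V] [DecidableEq V] (G : SimpleGraph V) [DecidableRel G.Adj]

theorem lapMatrix_add_lapMatrix_compl [NonAssocRing R] :
    G.lapMatrix R + Gᶜ.lapMatrix R = (completeGraph V).lapMatrix R := by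
  have hadj :=
    IsCompl.adjMatrix_add_adjMatrix_eq_adjMatrix_completeGraph R (isCompl_compl (x := G))
  have hdeg : G.degMatrix R + Gᶜ.degMatrix R = (completeGraph V).degMatrix R := by
    simp only [degMatrix, diagonal_add]
    congr 1
    ext v
    simpa only [add_mulVec, Pi.add_apply, adjMatrix_mulVec_const_apply, mul_one] using
      congr_fun (congrArg (· *ᵥ Function.const V (1 : R)) hadj) v
  rw [lapMatrix, lapMatrix, lapMatrix, ← hadj, ← hdeg]
  abel

theorem lapMatrix_completeGraph_mulVec_apply [CommRing R] (x : V → R) (v : V) :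
    ((completeGraph V).lapMatrix R *ᵥ x) v = Fintype.card V * x v - ∑ i, x i := by
  have hdeg : ((completeGraph V).degree v : R) = Fintype.card V - 1 := by
    rw [← card_neighborFinset_eq_degree, neighborFinset_top, Finset.card_compl,
      Finset.card_singleton, Nat.cast_sub (Fintype.card_pos_iff.mpr ⟨v⟩), Nat.cast_one]
  have hsum := Finset.sum_compl_add_sum {v} x
  rw [Finset.sum_singleton] at hsum
  rw [lapMatrix_mulVec_apply, neighborFinset_top, hdeg]
  linear_combination -hsum

theorem sum_lapMatrix_mulVec [CommRing R] (x : V → R) : ∑ i, (G.lapMatrix R *ᵥ x) i = 0 := by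
  rw [← one_dotProduct, dotProduct_mulVec, ← (G.isSymm_lapMatrix R).eq, vecMul_transpose]
  exact (congrArg (· ⬝ᵥ x) G.lapMatrix_mulVec_const_eq_zero).trans (zero_dotProduct x)

theorem lapMatrix_mulVec_eq_card_smul_iff [Field R] [CharZero R] [Nonempty V] (x : V → R) :
    G.lapMatrix R *ᵥ x = (Fintype.card V : R) • x ↔
      Gᶜ.lapMatrix R *ᵥ x = 0 ∧ ∑ i, x i = 0 := by
  have hsplit (v : V) : (Gᶜ.lapMatrix R *ᵥ x) v =
      Fintype.card V * x v - ∑ i, x i - (G.lapMatrix R *ᵥ x) v := by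
    rw [← lapMatrix_completeGraph_mulVec_apply, ← lapMatrix_add_lapMatrix_compl G, add_mulVec,
      Pi.add_apply]
    ring
  constructor
  · intro h
    have hcompl (v : V) : (Gᶜ.lapMatrix R *ᵥ x) v = -∑ i, x i := by
      rw [hsplit, h, Pi.smul_apply, smul_eq_mul]
      ring
    have hsum : ∑ i, x i = 0 := by
      simpa [hcompl] using Gᶜ.sum_lapMatrix_mulVec x
    exact ⟨funext fun v ↦ by rw [hcompl, hsum, neg_zero, Pi.zero_apply], hsum⟩
  · rintro ⟨hker, hsum⟩
    funext v
    have := hsplit v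
    rw [hker, hsum, Pi.zero_apply] at this
    rw [Pi.smul_apply, smul_eq_mul]
    linear_combination this

theorem eigenspace_toLin'_lapMatrix_card [Field R] [CharZero R] [Nonempty V] :
    Module.End.eigenspace (toLin' (G.lapMatrix R)) (Fintype.card V : R) =
      LinearMap.ker (toLin' (Gᶜ.lapMatrix R)) ⊓
        LinearMap.ker (dotProductBilin R R (1 : V → R)) := by
  ext x
  simp only [Module.End.mem_eigenspace_iff, toLin'_apply, Submodule.mem_inf, LinearMap.mem_ker,
    dotProductBilin_apply_apply, one_dotProduct]
  exact G.lapMatrix_mulVec_eq_card_smul_iff x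

end SimpleGraph

/-- If the complement of `G` has exactly `q` connected components, then the
multiplicity of `N` as a Laplacian eigenvalue of `G` (the dimension of the eigenspace,
i.e. of the kernel of `L(G) - N·I`) is exactly `q - 1`. -/
theorem multiplicity_card_eigenvalue_eq_components_sub_one {N : ℕ} (hN : 2 ≤ N)
    (G : SimpleGraph (Fin N)) (q : ℕ) (hq : Nat.card Gᶜ.ConnectedComponent = q) :
    Module.finrank ℝ
      (Module.End.eigenspace (Matrix.toLin' (lapR G)) (N : ℝ)) = q - 1 := by
  let := Classical.decRel G.Adj
  have : Nonempty (Fin N) := ⟨⟨0, by omega⟩⟩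
  have hker : Module.finrank ℝ (LinearMap.ker (toLin' (Gᶜ.lapMatrix ℝ))) = q := by
    rw [← hq, Nat.card_eq_fintype_card, Gᶜ.card_connectedComponent_eq_finrank_ker_toLin'_lapMatrix]
  have hone : (1 : Fin N → ℝ) ∈ LinearMap.ker (toLin' (Gᶜ.lapMatrix ℝ)) :=
    Gᶜ.lapMatrix_mulVec_const_eq_zero
  have hdim := Submodule.finrank_inf_ker_add_one (f := dotProductBilin ℝ ℝ 1) hone
    (by simp [one_dotProduct_one]; omega)
  have hcard : (N : ℝ) = Fintype.card (Fin N) := by rw [Fintype.card_fin]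
  rw [lapR, hcard, G.eigenspace_toLin'_lapMatrix_card]
  omega
end

section
/- Let G₁ be the simple graph on vertex set {1,2,3,4,5,6} with edge set {{1,2},{1,3},{1,4},{2,5},{2,6},{3,5},{3,6},{4,5},{4,6}} (the complete bipartite graph K_{3,3} with parts {1,5,6} and {2,3,4}), and let G = G₁ + e{1,6} + e{2,3} + e{3,4} be the graph obtained by adding the three edges {1,6}, {2,3}, {3,4}. Then the second smallest and the largest Laplacian eigenvalues are unchanged: λ₂(G) = λ₂(G₁) = 3 and λ₆(G) = λ₆(G₁) = 6, so r(G) = r(G₁) = 1/2. -/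
/-!
Both Laplacians are annihilated by explicit integer polynomials, `X (X - 3) (X - 6)` for `G₁`
and `X (X - 3) (X - 4) (X - 5) (X - 6)` for `G`, so every eigenvalue is one of their roots.
The traces of `L` and `L²` give the sum and the sum of squares of the eigenvalues
(`18, 72` for `G₁` and `24, 122` for `G`); for a sorted tuple of such roots these two power
sums force the second entry to be `3` and the last to be `6`.
-/

open Matrix

/-- The graph `G₁` of the paper: `K_{3,3}` with parts `{1,5,6}` and `{2,3,4}`, on
vertices `0, …, 5` (labelled `1, …, 6` in the paper). -/
def G₁6 : SimpleGraph (Fin 6) :=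
  SimpleGraph.fromEdgeSet
    {s(0, 1), s(0, 2), s(0, 3), s(1, 4), s(1, 5), s(2, 4), s(2, 5), s(3, 4), s(3, 5)}

/-- `G = G₁ + e{1,6} + e{2,3} + e{3,4}` (here `{0,5}`, `{1,2}` and `{2,3}`). -/
def G₁6' : SimpleGraph (Fin 6) :=
  G₁6 ⊔ SimpleGraph.edge 0 5 ⊔ SimpleGraph.edge 1 2 ⊔ SimpleGraph.edge 2 3

open Polynomial

theorem Matrix.IsHermitian.trace_pow_eq_sum_eigenvalues_pow {𝕜 n : Type*} [RCLike 𝕜] [Fintype n]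
    [DecidableEq n] {A : Matrix n n 𝕜} (hA : A.IsHermitian) (k : ℕ) :
    (A ^ k).trace = ∑ i, (hA.eigenvalues i : 𝕜) ^ k := by
  conv_lhs => rw [hA.spectral_theorem, ← map_pow, Unitary.conjStarAlgAut_apply, trace_mul_cycle,
    Unitary.coe_star_mul_self, one_mul, diagonal_pow, trace_diagonal]
  simp

theorem Matrix.IsHermitian.eval_eigenvalues_eq_zero_of_aeval_eq_zero {n : Type*} [Fintype n]
    [DecidableEq n] {A : Matrix n n ℝ} (hA : A.IsHermitian) {p : ℝ[X]} (hp : aeval A p = 0)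
    (i : n) :
    p.eval (hA.eigenvalues i) = 0 := by
  have : Nonempty n := ⟨i⟩
  simpa [hp, spectrum.zero_eq] using
    spectrum.subset_polynomial_aeval A p ⟨_, hA.eigenvalues_mem_spectrum_real i, rfl⟩

theorem SimpleGraph.map_lapMatrix {V R S : Type*} [Fintype V] [DecidableEq V] [Ring R] [Ring S]
    (G : SimpleGraph V) [DecidableRel G.Adj] (f : R →+* S) :
    (G.lapMatrix R).map f = G.lapMatrix S := by
  ext i j
  simp [lapMatrix, degMatrix, adjMatrix, diagonal_apply, apply_ite f]

section SortedLapEigs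

variable {N : ℕ} (G : SimpleGraph (Fin N))

theorem monotone_sortedLapEigs : Monotone (sortedLapEigs G) :=
  Tuple.monotone_sort _

variable [DecidableRel G.Adj]

theorem sortedLapEigs_eq_comp_sort :
    sortedLapEigs G = (G.posSemidef_lapMatrix ℝ).isHermitian.eigenvalues ∘
      Tuple.sort (G.posSemidef_lapMatrix ℝ).isHermitian.eigenvalues := by
  rw [sortedLapEigs]
  congr!

theorem sum_sortedLapEigs_pow (k : ℕ) :
    ∑ i, sortedLapEigs G i ^ k = ((G.lapMatrix ℤ ^ k).trace : ℝ) := by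
  simp only [sortedLapEigs_eq_comp_sort, Function.comp_apply]
  rw [Equiv.sum_comp (Tuple.sort _) (fun i => _ ^ k),
    ← eq_intCast (Int.castRingHom ℝ), AddMonoidHom.map_trace, ← RingHom.mapMatrix_apply, map_pow,
    RingHom.mapMatrix_apply, G.map_lapMatrix,
    (G.posSemidef_lapMatrix ℝ).isHermitian.trace_pow_eq_sum_eigenvalues_pow]
  rfl

theorem aeval_sortedLapEigs_eq_zero {p : ℤ[X]} (hp : aeval (G.lapMatrix ℤ) p = 0) (i : Fin N) :
    aeval (sortedLapEigs G i) p = 0 := by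
  have hA := (G.posSemidef_lapMatrix ℝ).isHermitian
  have hp' : aeval (G.lapMatrix ℝ) (p.map (algebraMap ℤ ℝ)) = 0 := by
    rw [aeval_map_algebraMap, ← G.map_lapMatrix (algebraMap ℤ ℝ)]
    change aeval ((Algebra.ofId ℤ ℝ).mapMatrix (G.lapMatrix ℤ)) p = 0
    rw [aeval_algHom_apply, hp, map_zero]
  rw [sortedLapEigs_eq_comp_sort, Function.comp_apply, ← aeval_map_algebraMap ℝ, coe_aeval_eq_eval]
  exact hA.eval_eigenvalues_eq_zero_of_aeval_eq_zero hp' _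

end SortedLapEigs

section SortedSpectra

variable {g : Fin 6 → ℝ}

theorem eq_three_six_of_values_036 (hg : Monotone g) (hval : ∀ i, g i = 0 ∨ g i = 3 ∨ g i = 6)
    (hsum : ∑ i, g i = 18) (hsq : ∑ i, g i ^ 2 = 72) : g 1 = 3 ∧ g 5 = 6 := by
  simp only [Fin.sum_univ_six] at hsum hsq
  have h01 := hg (show (0 : Fin 6) ≤ 1 by decide)
  have h12 := hg (show (1 : Fin 6) ≤ 2 by decide)
  have h23 := hg (show (2 : Fin 6) ≤ 3 by decide)
  have h34 := hg (show (3 : Fin 6) ≤ 4 by decide)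
  have h45 := hg (show (4 : Fin 6) ≤ 5 by decide)
  have hnonneg : ∀ i, 0 ≤ g i := fun i => by rcases hval i with h | h | h <;> rw [h] <;> norm_num
  have hsq_ge : ∀ i, 9 * g i - 18 ≤ g i ^ 2 := fun i => by
    rcases hval i with h | h | h <;> rw [h] <;> norm_num
  constructor
  · rcases hval 1 with h | h | h
    -- with `g 0 = g 1 = 0`, four values in `{0, 3, 6}` sum to `18`, so their squares sum to `≥ 90`
    · linarith [hnonneg 0, hsq_ge 2, hsq_ge 3, hsq_ge 4, hsq_ge 5, sq_nonneg (g 0), sq_nonneg (g 1)]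
    · exact h
    · linarith [hnonneg 0]
  · rcases hval 5 with h | h | h
    · linarith [hnonneg 0]
    · have hsq_le_three : ∀ i, g i ^ 2 ≤ 3 * g i := fun i => by
        have : g i ≤ 3 := h ▸ hg (Fin.le_last i)
        rcases hval i with h | h | h <;> rw [h] at this ⊢ <;> linarith
      linarith [hsq_le_three 0, hsq_le_three 1, hsq_le_three 2, hsq_le_three 3, hsq_le_three 4,
        hsq_le_three 5]
    · exact h

theorem eq_three_six_of_values_03456 (hg : Monotone g)
    (hval : ∀ i, g i = 0 ∨ g i = 3 ∨ g i = 4 ∨ g i = 5 ∨ g i = 6)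
    (hsum : ∑ i, g i = 24) (hsq : ∑ i, g i ^ 2 = 122) : g 1 = 3 ∧ g 5 = 6 := by
  simp only [Fin.sum_univ_six] at hsum hsq
  have h01 := hg (show (0 : Fin 6) ≤ 1 by decide)
  have h12 := hg (show (1 : Fin 6) ≤ 2 by decide)
  have h23 := hg (show (2 : Fin 6) ≤ 3 by decide)
  have h34 := hg (show (3 : Fin 6) ≤ 4 by decide)
  have h45 := hg (show (4 : Fin 6) ≤ 5 by decide)
  have hnonneg : ∀ i, 0 ≤ g i := fun i => by
    rcases hval i with h | h | h | h | h <;> rw [h] <;> norm_num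
  have hsq_le_six : ∀ i, g i ^ 2 ≤ 6 * g i := fun i => by
    rcases hval i with h | h | h | h | h <;> rw [h] <;> norm_num
  constructor
  · rcases hval 1 with h | h | h | h | h
    -- with `g 0 = g 1 = 0`, four values summing to `24` have squares summing to `≥ 144`
    · have hsq_ge : ∀ i, 12 * g i - 36 ≤ g i ^ 2 := fun i => by
        rcases hval i with h | h | h | h | h <;> rw [h] <;> norm_num
      linarith [hnonneg 0, hsq_ge 2, hsq_ge 3, hsq_ge 4, hsq_ge 5, sq_nonneg (g 0), sq_nonneg (g 1)]
    · exact h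
    -- with `g 1 ≥ 4`, the bound `g² ≤ 10 g - 24` on `[4, 6]` caps the squares at `120 - 4 g 0`
    all_goals
      have hsq_le_of_ge_four : ∀ i, 1 ≤ i → g i ^ 2 ≤ 10 * g i - 24 := fun i hi => by
        have : 4 ≤ g i := by linarith [hg hi]
        rcases hval i with h | h | h | h | h <;> rw [h] at this ⊢ <;> linarith
      linarith [hnonneg 0, hsq_le_six 0, hsq_le_of_ge_four 1 (by decide),
        hsq_le_of_ge_four 2 (by decide), hsq_le_of_ge_four 3 (by decide),
        hsq_le_of_ge_four 4 (by decide), hsq_le_of_ge_four 5 (by decide)]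
  · by_contra hne
    have h5 : g 5 ≤ 5 := by
      rcases hval 5 with h | h | h | h | h <;> first | exact absurd h hne | linarith
    have hsq_le_five : ∀ i, g i ^ 2 ≤ 5 * g i := fun i => by
      have : g i ≤ 5 := (hg (Fin.le_last i)).trans h5
      rcases hval i with h | h | h | h | h <;> rw [h] at this ⊢ <;> linarith
    linarith [hsq_le_five 0, hsq_le_five 1, hsq_le_five 2, hsq_le_five 3, hsq_le_five 4,
      hsq_le_five 5]

end SortedSpectra

instance : DecidableRel G₁6.Adj := by unfold G₁6; infer_instance

-- Mathlib's instance for `edge` is built with `rw`, which `decide` cannot reduce through.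
instance {V : Type*} [DecidableEq V] (s t : V) : DecidableRel (SimpleGraph.edge s t).Adj :=
  fun v w => decidable_of_iff' _ (SimpleGraph.edge_adj s t v w)

instance : DecidableRel G₁6'.Adj := by unfold G₁6'; infer_instance

theorem sortedLapEigs_G₁6 : sortedLapEigs G₁6 1 = 3 ∧ sortedLapEigs G₁6 5 = 6 := by
  have hroot : aeval (G₁6.lapMatrix ℤ) (X * (X - 3) * (X - 6) : ℤ[X]) = 0 := by
    simp only [map_mul, map_sub, aeval_X, map_ofNat]
    decide
  have htr : (G₁6.lapMatrix ℤ).trace = 18 := by decide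
  have htr2 : (G₁6.lapMatrix ℤ ^ 2).trace = 72 := by decide
  refine eq_three_six_of_values_036 (monotone_sortedLapEigs G₁6) (fun i => ?_) ?_ ?_
  · have h := aeval_sortedLapEigs_eq_zero G₁6 hroot i
    simp only [map_mul, map_sub, aeval_X, map_ofNat] at h
    simpa [sub_eq_zero, or_assoc] using h
  · simpa [htr] using sum_sortedLapEigs_pow G₁6 1
  · simpa [htr2] using sum_sortedLapEigs_pow G₁6 2

theorem sortedLapEigs_G₁6' : sortedLapEigs G₁6' 1 = 3 ∧ sortedLapEigs G₁6' 5 = 6 := by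
  have hroot : aeval (G₁6'.lapMatrix ℤ)
      (X * (X - 3) * (X - 4) * (X - 5) * (X - 6) : ℤ[X]) = 0 := by
    simp only [map_mul, map_sub, aeval_X, map_ofNat]
    decide
  have htr : (G₁6'.lapMatrix ℤ).trace = 24 := by decide
  have htr2 : (G₁6'.lapMatrix ℤ ^ 2).trace = 122 := by decide
  refine eq_three_six_of_values_03456 (monotone_sortedLapEigs G₁6') (fun i => ?_) ?_ ?_
  · have h := aeval_sortedLapEigs_eq_zero G₁6' hroot i
    simp only [map_mul, map_sub, aeval_X, map_ofNat] at h
    simpa [sub_eq_zero, or_assoc] using h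
  · simpa [htr] using sum_sortedLapEigs_pow G₁6' 1
  · simpa [htr2] using sum_sortedLapEigs_pow G₁6' 2

/-- Adding the three edges `{1,6}, {2,3}, {3,4}` to `G₁` leaves the second
smallest and largest Laplacian eigenvalues unchanged: `λ₂ = 3`, `λ₆ = 6`, `r = 1/2` for
both graphs. -/
theorem addEdges_eigenvalues_unchanged :
    sortedLapEigs G₁6' 1 = 3 ∧ sortedLapEigs G₁6 1 = 3 ∧
    sortedLapEigs G₁6' 5 = 6 ∧ sortedLapEigs G₁6 5 = 6 ∧
    sortedLapEigs G₁6' 1 / sortedLapEigs G₁6' 5 = 1 / 2 ∧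
    sortedLapEigs G₁6 1 / sortedLapEigs G₁6 5 = 1 / 2 := by
  obtain ⟨h₁', h₅'⟩ := sortedLapEigs_G₁6'
  obtain ⟨h₁, h₅⟩ := sortedLapEigs_G₁6
  refine ⟨h₁', h₁, h₅', h₅, ?_, ?_⟩ <;> norm_num [h₁', h₅', h₁, h₅]
end
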